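/- Let G be a k-connected finite simple graph with independence number α(G) ≤ k + 2, let P be a longest path in G, and let H be a connected component of G − V(P). Then H is a complete graph (its vertices are pairwise adjacent in G) and the set of attachment points of H on P has size exactly k. -/

import Mathlib

/-!
Write `A` for the set of attachment points of `H` on the longest path `P = x ⋯ y`, and `s⁺` for
the successor of `s` on `P`. Rerouting `P` through `H` shows that neither end of `P` lies in `A`
and that `{x} ∪ A⁺ ∪ I` is independent for every independent set `I ⊆ H`: any edge inside it
would yield a path longer than `P`. As `A` separates `H` from `x`, `k`-connectivity gives
`|A| ≥ k`. Taking for `I` a single vertex, `α(G) ≤ k + 2` gives `|A| ≤ k`, while a non-edge of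
`H` taken as `I` would give `|A| ≤ k - 1`.
-/

open SimpleGraph

/-- `p` is a longest path in the graph `G`. -/
def IsLongestPath {V : Type} (G : SimpleGraph V) {u v : V} (p : G.Walk u v) : Prop :=
  p.IsPath ∧ ∀ (a b : V) (q : G.Walk a b), q.IsPath → q.length ≤ p.length

/-- `G` is `k`-connected: it has at least `k` vertices and deleting any set of fewer
than `k` vertices leaves a connected graph. -/
def KConnected {V : Type} [Fintype V] (k : ℕ) (G : SimpleGraph V) : Prop :=
  k ≤ Fintype.card V ∧
    ∀ S : Finset V, S.card < k → (G.induce ((↑S : Set V)ᶜ)).Connected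

/-- The attachment points on `p` of the component `C` of `G - V(p)`: the vertices of
`p` having a neighbor in `C`. -/
def attachPoints {V : Type} (G : SimpleGraph V) {x y : V} (p : G.Walk x y)
    (C : (G.induce {v : V | v ∉ p.support}).ConnectedComponent) : Set V :=
  {s : V | s ∈ p.support ∧ ∃ h : {v : V | v ∉ p.support},
    (G.induce {v : V | v ∉ p.support}).connectedComponentMk h = C ∧ G.Adj ↑h s}

namespace SimpleGraph.Walk

variable {V : Type} {G : SimpleGraph V}

theorem exists_eq_append_cons_of_mem_darts {u v : V} :
    ∀ (p : G.Walk u v) {d : G.Dart}, d ∈ p.darts →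
      ∃ (p₁ : G.Walk u d.fst) (p₂ : G.Walk d.snd v), p = p₁.append (cons d.adj p₂)
  | nil, _, hd => by simp at hd
  | cons h q, d, hd => by
    rw [darts_cons, List.mem_cons] at hd
    rcases hd with rfl | hd
    · exact ⟨nil, q, rfl⟩
    · obtain ⟨p₁, p₂, rfl⟩ := exists_eq_append_cons_of_mem_darts q hd
      exact ⟨cons h p₁, p₂, rfl⟩

theorem exists_eq_append_cons_append_cons {u v : V} (p : G.Walk u v) {d₁ d₂ : G.Dart}
    (h₁ : d₁ ∈ p.darts) (h₂ : d₂ ∈ p.darts) (hne : d₁ ≠ d₂) :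
    (∃ (p₁ : G.Walk u d₁.fst) (p₂ : G.Walk d₁.snd d₂.fst) (p₃ : G.Walk d₂.snd v),
      p = p₁.append (cons d₁.adj (p₂.append (cons d₂.adj p₃)))) ∨
    (∃ (p₁ : G.Walk u d₂.fst) (p₂ : G.Walk d₂.snd d₁.fst) (p₃ : G.Walk d₁.snd v),
      p = p₁.append (cons d₂.adj (p₂.append (cons d₁.adj p₃)))) := by
  obtain ⟨q₁, q₂, rfl⟩ := exists_eq_append_cons_of_mem_darts p h₁
  rw [darts_append, darts_cons, List.mem_append, List.mem_cons] at h₂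
  rcases h₂ with h₂ | rfl | h₂
  · obtain ⟨r₁, r₂, rfl⟩ := exists_eq_append_cons_of_mem_darts q₁ h₂
    exact .inr ⟨r₁, r₂, q₂, by rw [← append_assoc, cons_append]⟩
  · exact absurd rfl hne
  · obtain ⟨r₁, r₂, rfl⟩ := exists_eq_append_cons_of_mem_darts q₂ h₂
    exact .inl ⟨q₁, r₁, r₂, rfl⟩

end SimpleGraph.Walk

namespace SimpleGraph

variable {V : Type} {G : SimpleGraph V}

theorem Reachable.exists_isPath_of_induce {s : Set V} {a b : s}
    (h : (G.induce s).Reachable a b) : ∃ w : G.Walk a b, w.IsPath ∧ ∀ v ∈ w.support, v ∈ s := by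
  obtain ⟨w, hw⟩ := h.exists_isPath
  refine ⟨w.map (Embedding.induce s).toHom, hw.map Subtype.val_injective, ?_⟩
  intro v hv
  have hv' : v ∈ (w.map (Embedding.induce s).toHom).support := hv
  rw [Walk.support_map, List.mem_map] at hv'
  obtain ⟨v, -, rfl⟩ := hv'
  exact v.2

theorem Walk.IsPath.ncard_darts_snd_eq_of_fst_mem {x y : V} {p : G.Walk x y}
    (hp : p.IsPath) {A : Set V} (hA : ∀ s ∈ A, s ∈ p.support) (hy : y ∉ A) :
    {t | ∃ d ∈ p.darts, d.fst ∈ A ∧ d.snd = t}.ncard = A.ncard := by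
  set D := {d | d ∈ p.darts ∧ d.fst ∈ A}
  have hfst : Set.InjOn (·.fst) D := by
    have := hp.support_nodup.sublist (List.dropLast_sublist _)
    rw [← Walk.map_fst_darts] at this
    exact fun d₁ h₁ d₂ h₂ => List.inj_on_of_nodup_map this h₁.1 h₂.1
  have hsnd : Set.InjOn (·.snd) D := by
    have := hp.support_nodup.sublist (List.tail_sublist _)
    rw [← Walk.map_snd_darts] at this
    exact fun d₁ h₁ d₂ h₂ => List.inj_on_of_nodup_map this h₁.1 h₂.1
  have hA : A = (·.fst) '' D := by
    ext s
    refine ⟨fun hs => ?_, by rintro ⟨d, ⟨-, hd⟩, rfl⟩; exact hd⟩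
    have : s ∈ p.darts.map (·.fst) := by
      rw [Walk.map_fst_darts]
      have := hA s hs
      rw [← Walk.dropLast_support_concat] at this
      exact (List.mem_append.1 this).resolve_right (by simpa using ne_of_mem_of_not_mem hs hy)
    obtain ⟨d, hd, rfl⟩ := List.mem_map.1 this
    exact ⟨d, ⟨hd, hs⟩, rfl⟩
  have hsucc : {t | ∃ d ∈ p.darts, d.fst ∈ A ∧ d.snd = t} = (·.snd) '' D := by
    ext t; simp [D, and_assoc]
  rw [hsucc, hsnd.ncard_image, hA, hfst.ncard_image]

theorem Walk.IsPath.snd_ne_start_of_mem_darts {x y : V} {p : G.Walk x y} (hp : p.IsPath)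
    {d : G.Dart} (hd : d ∈ p.darts) : d.snd ≠ x := by
  have hnodup := hp.support_nodup
  rw [← Walk.cons_tail_support, List.nodup_cons] at hnodup
  rintro rfl
  exact hnodup.1 (Walk.map_snd_darts p ▸ List.mem_map_of_mem hd)

theorem ConnectedComponent.exists_isPath_of_mem_supp {s : Set V}
    {C : (G.induce s).ConnectedComponent} {u v : V} (hu : u ∈ Subtype.val '' C.supp)
    (hv : v ∈ Subtype.val '' C.supp) : ∃ w : G.Walk u v, w.IsPath ∧ ∀ z ∈ w.support, z ∈ s := by
  obtain ⟨u, hu, rfl⟩ := hu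
  obtain ⟨v, hv, rfl⟩ := hv
  exact (ConnectedComponent.exact (hu.trans hv.symm)).exists_isPath_of_induce

end SimpleGraph

theorem KConnected.le_ncard_of_forall_walk {V : Type} {G : SimpleGraph V} [Fintype V] {k : ℕ}
    (hG : KConnected k G) {S : Set V} {u v : V} (hu : u ∉ S) (hv : v ∉ S)
    (hS : ∀ w : G.Walk u v, ∃ z ∈ w.support, z ∈ S) : k ≤ S.ncard := by
  by_contra! hlt
  have hconn := hG.2 (Set.toFinite S).toFinset (by rwa [← Set.ncard_eq_toFinset_card S])
  rw [Set.Finite.coe_toFinset] at hconn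
  obtain ⟨w, -, hwS⟩ := (hconn.preconnected ⟨u, hu⟩ ⟨v, hv⟩).exists_isPath_of_induce
  obtain ⟨z, hz, hzS⟩ := hS w
  exact hwS z hz hzS

namespace IsLongestPath

open Walk

variable {V : Type} {G : SimpleGraph V} {x y : V} {p : G.Walk x y}

theorem reverse (hp : IsLongestPath G p) : IsLongestPath G p.reverse :=
  ⟨hp.1.reverse, fun a b q hq => (hp.2 a b q hq).trans_eq p.length_reverse.symm⟩

/-- A walk visiting exactly the vertices of `p` and of a path disjoint from `p` would be a
longer path than `p`. -/
theorem not_perm_support_append (hp : IsLongestPath G p) {a b h h' : V} (q : G.Walk a b)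
    (w : G.Walk h h') (hw : w.IsPath) (hwp : ∀ v ∈ w.support, v ∉ p.support) :
    ¬ q.support.Perm (p.support ++ w.support) := by
  intro hperm
  have hnodup : (p.support ++ w.support).Nodup :=
    List.nodup_append.2 ⟨hp.1.support_nodup, hw.support_nodup,
      fun v hv v' hv' hvv' => hwp v' hv' (hvv' ▸ hv)⟩
  have hq := hp.2 a b q ((isPath_def q).2 (hperm.nodup_iff.2 hnodup))
  have hlen := hperm.length_eq
  simp only [List.length_append, length_support] at hlen
  omega

theorem not_adj_start (hp : IsLongestPath G p) {h : V} (hh : h ∉ p.support) :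
    ¬ G.Adj h x := fun hadj =>
  hp.not_perm_support_append (cons hadj p) (nil : G.Walk h h) .nil (by simpa using hh)
    (by simp [List.perm_cons_append_cons])

theorem not_adj_end (hp : IsLongestPath G p) {h : V} (hh : h ∉ p.support) :
    ¬ G.Adj h y :=
  hp.reverse.not_adj_start (by simpa using hh)

theorem not_adj_start_snd (hp : IsLongestPath G p) {d : G.Dart} (hd : d ∈ p.darts) {h : V}
    (hh : h ∉ p.support) (hadj : G.Adj h d.fst) : ¬ G.Adj x d.snd := by
  obtain ⟨p₁, p₂, rfl⟩ := exists_eq_append_cons_of_mem_darts p hd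
  intro hx
  refine hp.not_perm_support_append (cons hadj (p₁.reverse.append (cons hx p₂)))
    (nil : G.Walk h h) .nil (by simpa using hh) ?_
  classical
  simp only [support_cons, support_append, support_reverse, support_nil, List.tail_cons,
    List.perm_iff_count, List.count_append, List.count_reverse, List.count_cons, List.count_nil]
  intro a; omega

theorem not_adj_snd_of_walk (hp : IsLongestPath G p) {d : G.Dart} (hd : d ∈ p.darts)
    {h h' : V} (w : G.Walk h h') (hw : w.IsPath) (hwp : ∀ v ∈ w.support, v ∉ p.support)
    (hadj : G.Adj d.fst h) : ¬ G.Adj h' d.snd := by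
  obtain ⟨p₁, p₂, rfl⟩ := exists_eq_append_cons_of_mem_darts p hd
  intro hh'
  refine hp.not_perm_support_append (p₁.append (cons hadj (w.append (cons hh' p₂)))) w hw hwp ?_
  classical
  simp only [support_cons, support_append, List.tail_cons,
    List.perm_iff_count, List.count_append]
  intro a; omega

theorem not_adj_snd_snd_of_append (hp : IsLongestPath G p) {d₁ d₂ : G.Dart}
    {p₁ : G.Walk x d₁.fst} {p₂ : G.Walk d₁.snd d₂.fst} {p₃ : G.Walk d₂.snd y}
    (hsplit : p = p₁.append (cons d₁.adj (p₂.append (cons d₂.adj p₃))))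
    {h h' : V} (w : G.Walk h h') (hw : w.IsPath) (hwp : ∀ v ∈ w.support, v ∉ p.support)
    (hadj₁ : G.Adj d₁.fst h) (hadj₂ : G.Adj h' d₂.fst) : ¬ G.Adj d₁.snd d₂.snd := by
  subst hsplit
  intro hs
  refine hp.not_perm_support_append
    (p₁.append (cons hadj₁ (w.append (cons hadj₂ (p₂.reverse.append (cons hs p₃)))))) w hw hwp ?_
  classical
  simp only [support_cons, support_append, support_reverse, List.tail_cons,
    List.perm_iff_count, List.count_append, List.count_reverse]
  intro a; omega

theorem not_adj_snd_snd (hp : IsLongestPath G p) {d₁ d₂ : G.Dart} (hd₁ : d₁ ∈ p.darts)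
    (hd₂ : d₂ ∈ p.darts) (hne : d₁ ≠ d₂)
    {h h' : V} (w : G.Walk h h') (hw : w.IsPath) (hwp : ∀ v ∈ w.support, v ∉ p.support)
    (hadj₁ : G.Adj d₁.fst h) (hadj₂ : G.Adj h' d₂.fst) : ¬ G.Adj d₁.snd d₂.snd := by
  rcases exists_eq_append_cons_append_cons p hd₁ hd₂ hne with
    ⟨p₁, p₂, p₃, hsplit⟩ | ⟨p₁, p₂, p₃, hsplit⟩
  · exact hp.not_adj_snd_snd_of_append hsplit w hw hwp hadj₁ hadj₂
  · refine fun hs => hp.not_adj_snd_snd_of_append hsplit w.reverse hw.reverse ?_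
      hadj₂.symm hadj₁.symm hs.symm
    simpa using hwp

end IsLongestPath

section Component

variable {V : Type} {G : SimpleGraph V} {x y : V} {p : G.Walk x y}
  {C : (G.induce {v : V | v ∉ p.support}).ConnectedComponent}

/-- `A⁺`: the darts of `p` point from `x` towards `y`, so `d.snd` is the successor of `d.fst`. -/
def attachSuccessors (G : SimpleGraph V) (p : G.Walk x y)
    (C : (G.induce {v : V | v ∉ p.support}).ConnectedComponent) : Set V :=
  {t | ∃ d ∈ p.darts, d.fst ∈ attachPoints G p C ∧ d.snd = t}

theorem exists_mem_attachPoints_of_walk {u v : V} (w : G.Walk u v)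
    (hu : u ∈ Subtype.val '' C.supp) (hv : v ∈ p.support) :
    ∃ z ∈ w.support, z ∈ attachPoints G p C := by
  induction w with
  | nil => exact absurd hv (by obtain ⟨u, -, rfl⟩ := hu; exact u.2)
  | @cons a b _ hab w ih =>
    obtain ⟨a, haC, rfl⟩ := hu
    by_cases hb : b ∈ p.support
    · exact ⟨b, by simp, hb, a, haC, hab⟩
    · have hbC : (⟨b, hb⟩ : {v : V | v ∉ p.support}) ∈ C.supp :=
        (ConnectedComponent.connectedComponentMk_eq_of_adj (G := G.induce _)
          (v := a) (w := ⟨b, hb⟩) hab).symm.trans haC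
      obtain ⟨z, hz, hzA⟩ := ih ⟨_, hbC, rfl⟩ hv
      exact ⟨z, by simp [hz], hzA⟩

theorem IsLongestPath.start_notMem_attachPoints (hp : IsLongestPath G p) :
    x ∉ attachPoints G p C := fun ⟨_, h, _, hadj⟩ => hp.not_adj_start h.2 hadj

theorem IsLongestPath.end_notMem_attachPoints (hp : IsLongestPath G p) :
    y ∉ attachPoints G p C := fun ⟨_, h, _, hadj⟩ => hp.not_adj_end h.2 hadj

theorem IsLongestPath.ncard_attachSuccessors (hp : IsLongestPath G p) :
    (attachSuccessors G p C).ncard = (attachPoints G p C).ncard :=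
  hp.1.ncard_darts_snd_eq_of_fst_mem (fun _ hs => hs.1) hp.end_notMem_attachPoints

theorem IsLongestPath.isIndepSet_insert_start_union_attachSuccessors (hp : IsLongestPath G p)
    {X : Set V} (hXC : X ⊆ Subtype.val '' C.supp) (hX : G.IsIndepSet X) :
    G.IsIndepSet (insert x (X ∪ attachSuccessors G p C)) := by
  have : Std.Symm fun v w => ¬ G.Adj v w := ⟨fun _ _ h h' => h h'.symm⟩
  rw [isIndepSet_iff, Set.pairwise_insert_of_symm, Set.pairwise_union_of_symm]
  refine ⟨⟨hX, ?succ, ?cross⟩, ?start⟩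
  case succ =>
    rintro _ ⟨d₁, hd₁, ⟨-, h₁, h₁C, hadj₁⟩, rfl⟩ _ ⟨d₂, hd₂, ⟨-, h₂, h₂C, hadj₂⟩, rfl⟩ hne
    obtain ⟨w, hw, hwp⟩ :=
      ConnectedComponent.exists_isPath_of_mem_supp ⟨h₁, h₁C, rfl⟩ ⟨h₂, h₂C, rfl⟩
    exact hp.not_adj_snd_snd hd₁ hd₂ (by rintro rfl; exact hne rfl) w hw hwp hadj₁.symm hadj₂
  case cross =>
    rintro v hv _ ⟨d, hd, ⟨-, h, hC, hadj⟩, rfl⟩ -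
    obtain ⟨w, hw, hwp⟩ := ConnectedComponent.exists_isPath_of_mem_supp ⟨h, hC, rfl⟩ (hXC hv)
    exact hp.not_adj_snd_of_walk hd w hw hwp hadj.symm
  case start =>
    rintro v (hv | ⟨d, hd, ⟨-, h, -, hadj⟩, rfl⟩) -
    · obtain ⟨v, -, rfl⟩ := hXC hv
      exact fun hadj => hp.not_adj_start v.2 hadj.symm
    · exact hp.not_adj_start_snd hd h.2 hadj

theorem IsLongestPath.ncard_attachPoints_add_ncard_le [Fintype V] {k : ℕ}
    (hα : ∀ s : Finset V, (∀ a ∈ s, ∀ b ∈ s, a ≠ b → ¬ G.Adj a b) → s.card ≤ k + 2)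
    (hp : IsLongestPath G p) {X : Set V} (hXC : X ⊆ Subtype.val '' C.supp)
    (hX : G.IsIndepSet X) : (attachPoints G p C).ncard + X.ncard + 1 ≤ k + 2 := by
  have hind := hp.isIndepSet_insert_start_union_attachSuccessors hXC hX
  have hxX : x ∉ X := fun hx => by
    obtain ⟨v, -, hv⟩ := hXC hx
    exact v.2 (by rw [hv]; exact p.start_mem_support)
  have hxA : x ∉ attachSuccessors G p C := by
    rintro ⟨d, hd, -, hdx⟩
    exact hp.1.snd_ne_start_of_mem_darts hd hdx
  have hdisj : Disjoint X (attachSuccessors G p C) := by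
    rw [Set.disjoint_left]
    rintro _ hv ⟨d, hd, -, rfl⟩
    obtain ⟨v, -, hv⟩ := hXC hv
    exact v.2 (hv ▸ p.dart_snd_mem_support_of_mem_darts hd)
  have := hα (Set.toFinite (insert x (X ∪ attachSuccessors G p C))).toFinset
    (fun a ha b hb => hind (by simpa using ha) (by simpa using hb))
  rw [← Set.ncard_eq_toFinset_card _, Set.ncard_insert_of_notMem (by simp [hxX, hxA]),
    Set.ncard_union_eq hdisj, hp.ncard_attachSuccessors] at this
  omega

end Component

/-- If `G` is `k`-connected with `α(G) ≤ k + 2`, `P` is a longest path in `G`, and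
`H` is a component of `G - V(P)`, then `H` is a complete graph and `H` has exactly
`k` attachment points on `P`. -/
theorem component_complete_and_k_attachment_points
    {V : Type} [Fintype V] (G : SimpleGraph V) (k : ℕ)
    (hconn : KConnected k G)
    (hα : ∀ s : Finset V, (∀ a ∈ s, ∀ b ∈ s, a ≠ b → ¬ G.Adj a b) → s.card ≤ k + 2)
    {x y : V} (p : G.Walk x y) (hp : IsLongestPath G p)
    (C : (G.induce {v : V | v ∉ p.support}).ConnectedComponent) :
    (∀ h h' : {v : V | v ∉ p.support},
      (G.induce {v : V | v ∉ p.support}).connectedComponentMk h = C →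
      (G.induce {v : V | v ∉ p.support}).connectedComponentMk h' = C →
      h ≠ h' → G.Adj ↑h ↑h') ∧
    (attachPoints G p C).ncard = k := by
  obtain ⟨u, hu⟩ := C.nonempty_supp
  have hk : k ≤ (attachPoints G p C).ncard :=
    hconn.le_ncard_of_forall_walk (fun hu' => u.2 hu'.1) hp.start_notMem_attachPoints
      fun w => exists_mem_attachPoints_of_walk w ⟨u, hu, rfl⟩ p.start_mem_support
  refine ⟨fun h h' hC hC' hne => ?_, le_antisymm ?_ hk⟩
  · by_contra hnadj
    have hne' : (h : V) ≠ h' := Subtype.coe_ne_coe.2 hne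
    have := hp.ncard_attachPoints_add_ncard_le hα (X := {(h : V), (h' : V)})
      (by rintro _ (rfl | rfl); exacts [⟨h, hC, rfl⟩, ⟨h', hC', rfl⟩])
      (Set.pairwise_pair.2 fun _ => ⟨hnadj, fun h'h => hnadj h'h.symm⟩)
    rw [Set.ncard_pair hne'] at this
    omega
  · have := hp.ncard_attachPoints_add_ncard_le hα (X := {(u : V)})
      (by rintro _ rfl; exact ⟨u, hu, rfl⟩) (Set.pairwise_singleton _ _)
    rw [Set.ncard_singleton] at this
    omega
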